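/- arXiv:2107.10516 — 10 statements merged into one kernel-verified Lean document; each statement's English description precedes it below -/
import Mathlib

section
/- For all real x > 0, (1 − (1 + Σ_{q=1}^{2} Π_{r=1}^{q} x/(r + x/(1 − e^{−x})))^{−1}) / (1 − e^{−x}) ≥ 1/2. Explicitly, with s(x) = x/(1 + x/(1 − e^{−x})) + x²/((1 + x/(1 − e^{−x}))·(2 + x/(1 − e^{−x}))), one has (1 − 1/(1 + s(x))) ≥ (1/2)·(1 − e^{−x}). -/
open Finset

lemma taylor_lb (x : ℝ) (h0 : 0 ≤ x) (h1 : x ≤ 1) :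
    1 - x + x^2/2 - x^3/6 + x^4/24 - x^5/100 ≤ Real.exp (-x) := by
  have hb := Real.exp_bound (x := -x) (by rw [abs_neg, abs_of_nonneg h0]; exact h1)
      (n := 5) (by norm_num)
  rw [abs_neg, abs_of_nonneg h0] at hb
  have hsum : ∑ m ∈ Finset.range 5, (-x) ^ m / (m.factorial : ℝ)
      = 1 - x + x^2/2 - x^3/6 + x^4/24 := by
    simp [Finset.sum_range_succ, Nat.factorial]
    ring
  rw [hsum] at hb
  norm_num [Nat.factorial] at hb
  have := abs_le.1 hb
  nlinarith [this.1, pow_nonneg h0 5]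

lemma pade (x : ℝ) (h0 : 0 ≤ x) (h2 : x ≤ 2) : 2 - x ≤ Real.exp (-x) * (2 + x) := by
  rcases le_total x 1 with h1 | h1
  · have ht := taylor_lb x h0 h1
    have hm := mul_le_mul_of_nonneg_right ht (by linarith : (0:ℝ) ≤ 2 + x)
    nlinarith [hm, pow_nonneg h0 3, pow_nonneg h0 5,
      mul_nonneg (pow_nonneg h0 3) (sub_nonneg.2 h1),
      mul_nonneg (mul_nonneg (pow_nonneg h0 3) h0) (sub_nonneg.2 h1),
      mul_nonneg (pow_nonneg h0 4) (sub_nonneg.2 h1)]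
  · have hu0 : 0 ≤ x - 1 := by linarith
    have hu1 : x - 1 ≤ 1 := by linarith
    have ht := taylor_lb (x - 1) hu0 hu1
    have hR : (0:ℝ) ≤ 1 - (x-1) + (x-1)^2/2 - (x-1)^3/6 + (x-1)^4/24 - (x-1)^5/100 := by
      nlinarith [sq_nonneg (x-1), sq_nonneg ((x-1)^2), pow_nonneg hu0 5, pow_nonneg hu0 3]
    have hsplit : Real.exp (-x) = Real.exp (-1) * Real.exp (-(x-1)) := by
      rw [← Real.exp_add]; ring_nf
    have he1 : (2.7182818286:ℝ)⁻¹ ≤ Real.exp (-1) := by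
      rw [Real.exp_neg]
      exact inv_anti₀ (Real.exp_pos 1) Real.exp_one_lt_d9.le
    rw [hsplit]
    have key : (2.7182818286:ℝ)⁻¹ * (1 - (x-1) + (x-1)^2/2 - (x-1)^3/6 + (x-1)^4/24 - (x-1)^5/100) * (2+x)
        ≤ Real.exp (-1) * Real.exp (-(x-1)) * (2+x) := by
      have h := mul_le_mul he1 ht hR (Real.exp_pos (-1)).le
      nlinarith [h]
    refine le_trans ?_ key
    nlinarith [pow_nonneg hu0 5, pow_nonneg hu0 3, sq_nonneg (x-1), pow_nonneg hu0 4,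
      mul_nonneg (pow_nonneg hu0 3) (sub_nonneg.2 hu1),
      mul_nonneg (pow_nonneg hu0 4) (sub_nonneg.2 hu1),
      mul_nonneg (pow_nonneg hu0 5) (sub_nonneg.2 hu1)]


lemma poly_key (x e : ℝ) (hx : 0 < x) (he : 0 < e) (he1 : e ≤ 1)
    (hlo : x ≤ e * (1 + x)) (hhi : e * (2 + x) ≤ 2 * x) :
    0 ≤ -e^2*(x^2+2*x+2) + e*(x^2+x) + x^2 := by
  rcases le_total x 2 with h | h
  · nlinarith [mul_nonneg (sub_nonneg.2 hlo) (sub_nonneg.2 hhi), sq_nonneg (e*(1+x)-x),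
      sq_nonneg (2*x - e*(2+x)), mul_pos hx hx, mul_pos he hx]
  · nlinarith [mul_nonneg (sub_nonneg.2 hlo) (sub_nonneg.2 he1), sq_nonneg (e*(1+x)-x),
      sq_nonneg (1-e), mul_pos hx hx, mul_nonneg (sub_nonneg.2 hlo) (by linarith : (0:ℝ) ≤ x - 2)]

lemma core (x e : ℝ) (hx : 0 < x) (he : 0 < e) (he1 : e ≤ 1)
    (hlo : x ≤ e * (1 + x)) (hhi : e * (2 + x) ≤ 2 * x) :
    1 - 1 / (1 + (x / (1 + x / e) + x ^ 2 / ((1 + x / e) * (2 + x / e))))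
      ≥ (1 / 2) * e := by
  have he' : e ≠ 0 := he.ne'
  have h1 : (0:ℝ) < 1 + x / e := by positivity
  have h2 : (0:ℝ) < 2 + x / e := by positivity
  set s := x / (1 + x / e) + x ^ 2 / ((1 + x / e) * (2 + x / e)) with hs_def
  have hs0 : 0 ≤ s := by positivity
  have hs1 : (0:ℝ) < 1 + s := by linarith
  have hsv : s = x * e * (2*e + x + x*e) / ((e + x) * (2*e + x)) := by
    rw [hs_def]
    field_simp
  have hd : (0:ℝ) < (e + x) * (2*e + x) := by positivity
  have hkey : e ≤ s * (2 - e) := by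
    rw [hsv, div_mul_eq_mul_div, le_div_iff₀ hd]
    nlinarith [poly_key x e hx he he1 hlo hhi, mul_pos he hx]
  have h3 : e * (1 + s) ≤ 2 * s := by nlinarith [hkey]
  clear_value s
  rw [ge_iff_le, le_sub_comm, div_le_iff₀ hs1]
  nlinarith [h3]


/-- Claim 4.2: the availability-to-normalization ratio of the capacity-2
birth–death chain is at least 1/2. -/
theorem stmt_1 (x : ℝ) (hx : 0 < x) :
    (1 - (1 + ∑ q ∈ Finset.Icc (1:ℕ) 2, ∏ r ∈ Finset.Icc 1 q,
        x / ((r : ℝ) + x / (1 - Real.exp (-x))))⁻¹) / (1 - Real.exp (-x)) ≥ 1 / 2 ∧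
    1 - 1 / (1 + (x / (1 + x / (1 - Real.exp (-x)))
        + x ^ 2 / ((1 + x / (1 - Real.exp (-x))) * (2 + x / (1 - Real.exp (-x))))))
      ≥ (1 / 2) * (1 - Real.exp (-x)) := by
  set e : ℝ := 1 - Real.exp (-x) with he_def
  have hE0 : 0 < Real.exp (-x) := Real.exp_pos _
  have hE1 : Real.exp (-x) < 1 := Real.exp_lt_one_iff.2 (by linarith)
  have he : 0 < e := by rw [he_def]; linarith
  have he1 : e ≤ 1 := by rw [he_def]; linarith
  have hlo : x ≤ e * (1 + x) := by
    have h := Real.add_one_le_exp x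
    have hEe : Real.exp (-x) * Real.exp x = 1 := by rw [← Real.exp_add]; simp
    have := mul_le_mul_of_nonneg_left h hE0.le
    rw [he_def]; nlinarith
  have hhi : e * (2 + x) ≤ 2 * x := by
    rcases le_total x 2 with h | h
    · have := pade x hx.le h
      rw [he_def]; nlinarith
    · nlinarith
  have hcore := core x e hx he he1 hlo hhi
  have he' : e ≠ 0 := he.ne'
  have h1 : (0:ℝ) < 1 + x / e := by positivity
  have h2 : (0:ℝ) < 2 + x / e := by positivity
  refine ⟨?_, hcore⟩
  have hS : ∑ q ∈ Finset.Icc (1:ℕ) 2, ∏ r ∈ Finset.Icc 1 q, x / ((r:ℝ) + x / e)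
      = x / (1 + x / e) + x ^ 2 / ((1 + x / e) * (2 + x / e)) := by
    rw [show Finset.Icc (1:ℕ) 2 = {1, 2} from rfl]
    rw [Finset.sum_insert (by decide), Finset.sum_singleton]
    rw [show Finset.Icc (1:ℕ) 1 = {1} from rfl, Finset.prod_singleton]
    rw [show Finset.Icc (1:ℕ) 2 = {1, 2} from rfl, Finset.prod_insert (by decide),
      Finset.prod_singleton]
    push_cast
    rw [div_mul_div_comm]
    ring_nf
  rw [hS, ge_iff_le, le_div_iff₀ he, inv_eq_one_div]
  linarith [hcore]
end

section
/- For all real z > 0, 1 − (1 + Σ_{q=1}^{2} Π_{r=1}^{q} z/(r + (3/4)·z/(1 − e^{−z})))^{−1} ≥ (4/7)·(1 − e^{−z}). -/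
/-!
Write `u = 1 - e^{-z}` and `c = 3z/(4u)`. The left side is the stationary probability
`z(z+2+c) / ((1+c)(2+c) + z(z+2+c))` that the chain is not empty, and after clearing
denominators (using `4uc = 3z`) the claim becomes `0 ≤ (3+4u-4u²)z² + (5u-8u²)z - 8u²`.
This quadratic in `z` is increasing for `z ≥ u`, and `z = -log(1-u) ≥ u + u²/2 + ⋯ + u⁵/5`;
at that partial sum the quadratic factors as `u³ g(u)` with `g ≥ 0` on `[0, 1]`.
Four terms of the logarithmic series would not suffice near `u = 1`.
-/

open Finset

lemma Real.sum_range_pow_div_le_neg_log_one_sub {x : ℝ} (h0 : 0 ≤ x) (h1 : x < 1) (n : ℕ) :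
    ∑ i ∈ range n, x ^ (i + 1) / (i + 1) ≤ -Real.log (1 - x) :=
  sum_le_hasSum _ (fun i _ => by positivity)
    (Real.hasSum_pow_div_log_of_abs_lt_one (by rw [abs_of_nonneg h0]; exact h1))

lemma partial_log_le_neg_log_one_sub {u : ℝ} (h0 : 0 ≤ u) (h1 : u < 1) :
    u + u ^ 2 / 2 + u ^ 3 / 3 + u ^ 4 / 4 + u ^ 5 / 5 ≤ -Real.log (1 - u) := by
  have h := Real.sum_range_pow_div_le_neg_log_one_sub h0 h1 5
  norm_num [sum_range_succ] at h
  exact h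

lemma availability_capacity_two_eq (z c : ℝ) (hz : 0 ≤ z) (hc : 0 ≤ c) :
    1 - (1 + ∑ q ∈ Icc (1 : ℕ) 2, ∏ r ∈ Icc 1 q, z / ((r : ℝ) + c))⁻¹
      = z * (z + 2 + c) / ((1 + c) * (2 + c) + z * (z + 2 + c)) := by
  have hsum : ∑ q ∈ Icc (1 : ℕ) 2, ∏ r ∈ Icc 1 q, z / ((r : ℝ) + c)
      = z / (1 + c) + z / (1 + c) * (z / (2 + c)) := by
    rw [show Icc (1 : ℕ) 2 = {1, 2} from rfl, sum_pair (by norm_num),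
      show Icc (1 : ℕ) 1 = {1} from rfl, show Icc (1 : ℕ) 2 = {1, 2} from rfl,
      prod_singleton, prod_pair (by norm_num)]
    norm_num
  rw [hsum]
  have h1 : 0 < 1 + c := by linarith
  have h2 : 0 < 2 + c := by linarith
  field_simp
  ring

lemma partial_log_quadratic_nonneg {u P : ℝ} (hu0 : 0 ≤ u) (hu1 : u ≤ 1)
    (hP : P = u + u ^ 2 / 2 + u ^ 3 / 3 + u ^ 4 / 4 + u ^ 5 / 5) :
    0 ≤ (3 + 4 * u - 4 * u ^ 2) * P ^ 2 + (5 * u - 8 * u ^ 2) * P - 8 * u ^ 2 := by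
  have hfactor : (3 + 4 * u - 4 * u ^ 2) * P ^ 2 + (5 * u - 8 * u ^ 2) * P - 8 * u ^ 2
      = u ^ 3 * (3 / 2 + 5 / 12 * u + 3 / 4 * u ^ 2 + 19 / 20 * u ^ 3 - 71 / 90 * u ^ 4
        - 713 / 720 * u ^ 5 - 23 / 60 * u ^ 6 - 79 / 300 * u ^ 7 - 6 / 25 * u ^ 8
        - 4 / 25 * u ^ 9) := by
    rw [hP]; ring
  rw [hfactor]
  refine mul_nonneg (pow_nonneg hu0 3) ?_
  -- bound each power by `u ^ 4` from the appropriate side; the coefficients sum to `g(1) > 0`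
  have hle : ∀ m n : ℕ, m ≤ n → u ^ n ≤ u ^ m := fun _ _ h => pow_le_pow_of_le_one hu0 hu1 h
  have h0 := hle 0 4 (by norm_num)
  have h1 := hle 1 4 (by norm_num)
  rw [pow_zero] at h0
  rw [pow_one] at h1
  linarith [hle 2 4 (by norm_num), hle 3 4 (by norm_num), hle 4 5 (by norm_num),
    hle 4 6 (by norm_num), hle 4 7 (by norm_num), hle 4 8 (by norm_num), hle 4 9 (by norm_num)]

lemma availability_quadratic_le_of_le {u P z : ℝ} (hu0 : 0 ≤ u) (hu1 : u ≤ 1) (huP : u ≤ P)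
    (hPz : P ≤ z) :
    (3 + 4 * u - 4 * u ^ 2) * P ^ 2 + (5 * u - 8 * u ^ 2) * P - 8 * u ^ 2
      ≤ (3 + 4 * u - 4 * u ^ 2) * z ^ 2 + (5 * u - 8 * u ^ 2) * z - 8 * u ^ 2 := by
  have hslope : 0 ≤ (3 + 4 * u - 4 * u ^ 2) * (z + P) + (5 * u - 8 * u ^ 2) := by
    nlinarith [mul_nonneg hu0 (sub_nonneg.2 hu1)]
  -- the difference of the two sides is `(z - P)` times the slope factor
  nlinarith [mul_nonneg (sub_nonneg.2 hPz) hslope]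

lemma le_availability_of_quadratic_nonneg {u z c : ℝ} (hu : 0 < u) (hz : 0 ≤ z) (hc : 0 ≤ c)
    (hcu : 4 * u * c = 3 * z)
    (hq : 0 ≤ (3 + 4 * u - 4 * u ^ 2) * z ^ 2 + (5 * u - 8 * u ^ 2) * z - 8 * u ^ 2) :
    4 / 7 * u ≤ z * (z + 2 + c) / ((1 + c) * (2 + c) + z * (z + 2 + c)) := by
  rw [le_div_iff₀ (by positivity)]
  have hgap : u * (7 * (z * (z + 2 + c)) - 4 * u * ((1 + c) * (2 + c) + z * (z + 2 + c)))
      = (3 + 4 * u - 4 * u ^ 2) * z ^ 2 + (5 * u - 8 * u ^ 2) * z - 8 * u ^ 2 := by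
    linear_combination (z - u * z - 3 * u - u * c) * hcu
  nlinarith [(mul_nonneg_iff_of_pos_left hu).1 (hgap ▸ hq)]

/-- Availability lower bound used in the 15/56-competitive multi-good analysis. -/
theorem stmt_2 (z : ℝ) (hz : 0 < z) :
    1 - (1 + ∑ q ∈ Finset.Icc (1:ℕ) 2, ∏ r ∈ Finset.Icc 1 q,
        z / ((r : ℝ) + (3 / 4) * z / (1 - Real.exp (-z))))⁻¹
      ≥ (4 / 7) * (1 - Real.exp (-z)) := by
  set u := 1 - Real.exp (-z) with hu
  have hu0 : 0 < u := by simp only [hu, sub_pos, Real.exp_lt_one_iff]; linarith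
  have hu1 : u < 1 := by linarith [Real.exp_pos (-z)]
  have hpartial := partial_log_le_neg_log_one_sub hu0.le hu1
  rw [hu, sub_sub_cancel, Real.log_exp, neg_neg, ← hu] at hpartial
  have hu_le : u ≤ u + u ^ 2 / 2 + u ^ 3 / 3 + u ^ 4 / 4 + u ^ 5 / 5 := by
    linarith [pow_pos hu0 2, pow_pos hu0 3, pow_pos hu0 4, pow_pos hu0 5]
  have hq := (partial_log_quadratic_nonneg hu0.le hu1.le rfl).trans
    (availability_quadratic_le_of_le hu0.le hu1.le hu_le hpartial)
  rw [availability_capacity_two_eq z _ hz.le (by positivity)]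
  exact le_availability_of_quadratic_nonneg hu0 hz.le (by positivity)
    (by field_simp) hq
end

section
/- For every positive integer C, the function g₁(C, w) := (1 − (Σ_{q=0}^{C} w^q/q!)^{−1}) / w is monotone decreasing in w on (0, ∞); that is, for all real 0 < w ≤ w′, g₁(C, w) ≥ g₁(C, w′). -/
open Finset

private noncomputable def Nf (C : ℕ) (x : ℝ) : ℝ := ∑ q ∈ Finset.range C, x ^ q / (Nat.factorial (q + 1) : ℝ)

private lemma sum_eq_aux (C : ℕ) (x : ℝ) :
    ∑ q ∈ Finset.range (C + 1), x ^ q / (Nat.factorial q : ℝ) = 1 + x * Nf C x := by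
  rw [Finset.sum_range_succ', Nf, Finset.mul_sum]
  simp only [pow_zero, Nat.factorial_zero, Nat.cast_one, div_one]
  rw [add_comm]
  congr 1
  refine Finset.sum_congr rfl fun q _ => ?_
  rw [pow_succ]
  ring

private lemma pow_sub_pow_le_aux (w w' : ℝ) (hw : 0 ≤ w) (h : w ≤ w') (q : ℕ) :
    w' ^ (q + 1) - w ^ (q + 1) ≤ ((q : ℝ) + 1) * w' ^ q * (w' - w) := by
  induction q with
  | zero => simp
  | succ q ih =>
    have hw' : 0 ≤ w' := hw.trans h
    have h2 : w ^ (q + 1) ≤ w' ^ (q + 1) := pow_le_pow_left₀ hw h _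
    have h3 : w' * (w' ^ (q + 1) - w ^ (q + 1)) ≤ w' * (((q : ℝ) + 1) * w' ^ q * (w' - w)) :=
      mul_le_mul_of_nonneg_left ih hw'
    have h5 : w ^ (q + 1) * (w' - w) ≤ w' ^ (q + 1) * (w' - w) :=
      mul_le_mul_of_nonneg_right h2 (by linarith)
    have h4 : w' * (((q : ℝ) + 1) * w' ^ q * (w' - w)) = ((q : ℝ) + 1) * w' ^ (q + 1) * (w' - w) := by
      ring
    have heq : w' ^ (q + 2) - w ^ (q + 2)
        = w' * (w' ^ (q + 1) - w ^ (q + 1)) + w ^ (q + 1) * (w' - w) := by ring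
    push_cast
    nlinarith [h3, h5, h4, heq]

private lemma Nf_nonneg_terms (C : ℕ) (x : ℝ) (hx : 0 ≤ x) : 0 ≤ Nf C x :=
  Finset.sum_nonneg fun q _ => div_nonneg (pow_nonneg hx _) (Nat.cast_nonneg _)

private lemma one_le_Nf (n : ℕ) (x : ℝ) (hx : 0 ≤ x) : 1 ≤ Nf (n + 1) x := by
  have h := Finset.single_le_sum
    (f := fun q => x ^ q / (Nat.factorial (q + 1) : ℝ))
    (fun q _ => div_nonneg (pow_nonneg hx _) (Nat.cast_nonneg _))
    (Finset.mem_range.2 (Nat.succ_pos n))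
  simpa [Nf] using h

private lemma key_aux (n : ℕ) (w w' : ℝ) (hw : 0 ≤ w) (h : w ≤ w') :
    Nf (n + 1) w' - Nf (n + 1) w ≤ (w' - w) * Nf (n + 1) w' := by
  have hw' : 0 ≤ w' := hw.trans h
  have e : ∀ y : ℝ, Nf (n + 1) y
      = (∑ q ∈ Finset.range n, y ^ (q + 1) / (Nat.factorial (q + 2) : ℝ)) + 1 := by
    intro y
    rw [Nf, Finset.sum_range_succ']
    simp [Nat.factorial]
  rw [e, e]
  have step1 : (∑ q ∈ Finset.range n, w' ^ (q + 1) / (Nat.factorial (q + 2) : ℝ))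
      - (∑ q ∈ Finset.range n, w ^ (q + 1) / (Nat.factorial (q + 2) : ℝ))
      ≤ (w' - w) * ∑ q ∈ Finset.range n, w' ^ q / (Nat.factorial (q + 1) : ℝ) := by
    rw [← Finset.sum_sub_distrib, Finset.mul_sum]
    refine Finset.sum_le_sum fun q _ => ?_
    rw [div_sub_div_same]
    have hfac : ((q : ℝ) + 1) * (Nat.factorial (q + 1) : ℝ) ≤ (Nat.factorial (q + 2) : ℝ) := by
      have : (q + 1) * Nat.factorial (q + 1) ≤ (q + 2) * Nat.factorial (q + 1) :=
        Nat.mul_le_mul_right _ (by omega)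
      calc ((q : ℝ) + 1) * (Nat.factorial (q + 1) : ℝ)
          = ((q + 1) * Nat.factorial (q + 1) : ℕ) := by push_cast; ring
        _ ≤ ((q + 2) * Nat.factorial (q + 1) : ℕ) := by exact_mod_cast this
        _ = (Nat.factorial (q + 2) : ℝ) := by rw [← Nat.factorial_succ]
    have hfacpos : (0 : ℝ) < (Nat.factorial (q + 2) : ℝ) := by
      exact_mod_cast Nat.factorial_pos _
    have hfacpos1 : (0 : ℝ) < (Nat.factorial (q + 1) : ℝ) := by
      exact_mod_cast Nat.factorial_pos _
    have hb := pow_sub_pow_le_aux w w' hw h q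
    have hwq : 0 ≤ w' ^ q := pow_nonneg hw' _
    rw [div_le_iff₀ hfacpos]  -- (w'^{q+1} - w^{q+1}) ≤ ((w'-w) * (w'^q / (q+1)!)) * (q+2)!
    calc w' ^ (q + 1) - w ^ (q + 1) ≤ ((q : ℝ) + 1) * w' ^ q * (w' - w) := hb
      _ ≤ (w' - w) * (w' ^ q / (Nat.factorial (q + 1) : ℝ)) * (Nat.factorial (q + 2) : ℝ) := by
          have h1 : 0 ≤ (w' - w) * w' ^ q := mul_nonneg (by linarith) hwq
          have h2 : ((q : ℝ) + 1) ≤ (Nat.factorial (q + 2) : ℝ) / (Nat.factorial (q + 1) : ℝ) :=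
            (le_div_iff₀ hfacpos1).2 hfac
          have h3 : (w' - w) * (w' ^ q / (Nat.factorial (q + 1) : ℝ)) * (Nat.factorial (q + 2) : ℝ)
              = ((w' - w) * w' ^ q) * ((Nat.factorial (q + 2) : ℝ) / (Nat.factorial (q + 1) : ℝ)) := by
            ring
          have h4 : ((q : ℝ) + 1) * w' ^ q * (w' - w)
              = ((w' - w) * w' ^ q) * ((q : ℝ) + 1) := by ring
          rw [h3, h4]
          exact mul_le_mul_of_nonneg_left h2 h1
  have step2 : (∑ q ∈ Finset.range n, w' ^ q / (Nat.factorial (q + 1) : ℝ))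
      ≤ ∑ q ∈ Finset.range (n + 1), w' ^ q / (Nat.factorial (q + 1) : ℝ) :=
    Finset.sum_le_sum_of_subset_of_nonneg
      (Finset.range_subset_range.2 (Nat.le_succ n))
      (fun q _ _ => div_nonneg (pow_nonneg hw' _) (Nat.cast_nonneg _))
  have hNf' : Nf (n + 1) w' = ∑ q ∈ Finset.range (n + 1), w' ^ q / (Nat.factorial (q + 1) : ℝ) := rfl
  have step3 : (w' - w) * ∑ q ∈ Finset.range n, w' ^ q / (Nat.factorial (q + 1) : ℝ)
      ≤ (w' - w) * Nf (n + 1) w' := by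
    rw [hNf']
    exact mul_le_mul_of_nonneg_left step2 (by linarith)
  have := step1.trans step3
  rw [e] at this
  linarith

/-- Fact C.3: `g₁(C, w) = (1 - (∑_{q=0}^C w^q/q!)⁻¹)/w` is monotone decreasing in `w`. -/
theorem stmt_3 (C : ℕ) (hC : 0 < C) (w w' : ℝ) (hw : 0 < w) (hww' : w ≤ w') :
    (1 - (∑ q ∈ Finset.range (C + 1), w ^ q / (Nat.factorial q : ℝ))⁻¹) / w
      ≥ (1 - (∑ q ∈ Finset.range (C + 1), w' ^ q / (Nat.factorial q : ℝ))⁻¹) / w' := by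
  obtain ⟨n, rfl⟩ : ∃ n, C = n + 1 := ⟨C - 1, by omega⟩
  have hw' : 0 < w' := lt_of_lt_of_le hw hww'
  rw [sum_eq_aux, sum_eq_aux]
  set a := Nf (n + 1) w with ha
  set b := Nf (n + 1) w' with hb
  have ha1 : 1 ≤ a := one_le_Nf n w hw.le
  have hb1 : 1 ≤ b := one_le_Nf n w' hw'.le
  have hda : (0 : ℝ) < 1 + w * a := by nlinarith
  have hdb : (0 : ℝ) < 1 + w' * b := by nlinarith
  have e1 : (1 - (1 + w * a)⁻¹) / w = a / (1 + w * a) := by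
    field_simp
    ring
  have e2 : (1 - (1 + w' * b)⁻¹) / w' = b / (1 + w' * b) := by
    field_simp
    ring
  rw [e1, e2, ge_iff_le, div_le_div_iff₀ hdb hda]
  have key : b - a ≤ (w' - w) * b := key_aux n w w' hw.le hww'
  have key2 : (w' - w) * b ≤ (w' - w) * (a * b) := by
    have h1 : 0 ≤ (w' - w) * b := mul_nonneg (by linarith) (by linarith)
    nlinarith
  nlinarith
end

section
/- For every positive integer C, the function g₂(C, w) := (1 − (1/6 + (5/6)·Σ_{q=0}^{C} (1/q!)·(6w/5)^q)^{−1}) / w is monotone decreasing in w on (0, ∞); that is, for all real 0 < w ≤ w′, g₂(C, w) ≥ g₂(C, w′). -/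
/-!
Write `F w = 1/6 + (5/6) E_C(6w/5)`, where `E_C` is the exponential series truncated after
degree `C`, so that `g₂(C, w) = (1 - F(w)⁻¹) / w`; for `C = 0` this vanishes. Its derivative has
the sign of `w F'(w) - F(w)(F(w) - 1)`, and since `E_C' = E_{C-1}` this comes down to the
polynomial inequality `x E_{C-1}(x) ≤ B + (5/6) B²` for `B = E_C(x) - 1` and `x ≥ 0`. For `C = 1`
both sides are explicit; for `C ≥ 2` one uses `E_{C-1} ≤ E_C = 1 + B` and `B ≥ x + x²/2`.
-/

open Finset Nat Set

noncomputable def expTrunc (n : ℕ) (x : ℝ) : ℝ :=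
  ∑ q ∈ range (n + 1), (1 / (q ! : ℝ)) * x ^ q

lemma expTrunc_succ (n : ℕ) (x : ℝ) :
    expTrunc (n + 1) x = expTrunc n x + x ^ (n + 1) / (n + 1)! := by
  rw [expTrunc, sum_range_succ, ← expTrunc]
  ring

lemma expTrunc_one (x : ℝ) : expTrunc 1 x = 1 + x := by
  simp [expTrunc, sum_range_succ]

lemma expTrunc_two (x : ℝ) : expTrunc 2 x = 1 + x + x ^ 2 / 2 := by
  simp [expTrunc, sum_range_succ]
  ring

lemma expTrunc_mono {x : ℝ} (hx : 0 ≤ x) : Monotone (expTrunc · x) :=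
  monotone_nat_of_le_succ fun n => by
    rw [expTrunc_succ]
    exact le_add_of_nonneg_right (by positivity)

lemma hasDerivAt_expTrunc_succ (n : ℕ) (x : ℝ) :
    HasDerivAt (expTrunc (n + 1)) (expTrunc n x) x := by
  induction n with
  | zero =>
    simpa [funext expTrunc_one, expTrunc] using (hasDerivAt_id x).const_add 1
  | succ n ih =>
    have hpow : HasDerivAt (fun y : ℝ => y ^ (n + 2) / ((n + 2)! : ℝ))
        (x ^ (n + 1) / ((n + 1)! : ℝ)) x := by
      refine ((hasDerivAt_pow (n + 2) x).div_const ((n + 2)! : ℝ)).congr_deriv ?_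
      rw [factorial_succ (n + 1)]
      push_cast
      field_simp
      ring
    rw [funext (expTrunc_succ (n + 1)), expTrunc_succ n x]
    exact ih.add hpow

lemma mul_expTrunc_le {x : ℝ} (hx : 0 ≤ x) (n : ℕ) :
    x * expTrunc n x ≤ (expTrunc (n + 1) x - 1) + 5 / 6 * (expTrunc (n + 1) x - 1) ^ 2 := by
  rcases n with _ | n
  · rw [expTrunc_one]
    simp [expTrunc]
    positivity
  · have hle : expTrunc (n + 1) x ≤ expTrunc (n + 2) x := expTrunc_mono hx (by omega)
    have hquad : 1 + x + x ^ 2 / 2 ≤ expTrunc (n + 2) x :=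
      expTrunc_two x ▸ expTrunc_mono hx (by omega)
    nlinarith [mul_le_mul_of_nonneg_left hle hx]

lemma antitoneOn_one_sub_inv_div {F F' : ℝ → ℝ}
    (hF : ∀ w ∈ Ioi (0 : ℝ), HasDerivAt F (F' w) w) (hpos : ∀ w ∈ Ioi (0 : ℝ), 0 < F w)
    (hle : ∀ w ∈ Ioi (0 : ℝ), w * F' w ≤ F w * (F w - 1)) :
    AntitoneOn (fun w => (1 - (F w)⁻¹) / w) (Ioi 0) := by
  have hderiv : ∀ w ∈ Ioi (0 : ℝ), HasDerivAt (fun w => (1 - (F w)⁻¹) / w)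
      ((w * F' w - F w * (F w - 1)) / (F w * w) ^ 2) w := by
    intro w hw
    refine ((((hF w hw).inv (hpos w hw).ne').const_sub 1).div (hasDerivAt_id w)
      (ne_of_gt hw)).congr_deriv ?_
    have hF0 := (hpos w hw).ne'
    have hw0 : w ≠ 0 := ne_of_gt hw
    simp only [id, Pi.inv_apply]
    field_simp
  refine antitoneOn_of_hasDerivWithinAt_nonpos (convex_Ioi 0)
    (fun w hw => (hderiv w hw).continuousAt.continuousWithinAt)
    (fun w hw => (hderiv w (interior_subset hw)).hasDerivWithinAt) fun w hw => ?_
  rw [interior_Ioi] at hw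
  exact div_nonpos_of_nonpos_of_nonneg (sub_nonpos.mpr (hle w hw)) (sq_nonneg _)

noncomputable def g₂ (C : ℕ) (w : ℝ) : ℝ :=
  (1 - (1 / 6 + 5 / 6 * expTrunc C (6 * w / 5))⁻¹) / w

theorem antitoneOn_g₂ (C : ℕ) : AntitoneOn (g₂ C) (Ioi 0) := by
  rcases C with _ | n
  · intro a _ b _ _
    norm_num [g₂, expTrunc]
  refine antitoneOn_one_sub_inv_div (F' := fun w => expTrunc n (6 * w / 5)) (fun w _ => ?_)
    (fun w (hw : 0 < w) => ?_) (fun w (hw : 0 < w) => ?_)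
  · refine (((hasDerivAt_expTrunc_succ n _).comp w
      (((hasDerivAt_id w).const_mul 6).div_const 5)).const_mul (5 / 6 : ℝ) |>.const_add (1 / 6)
      ).congr_deriv ?_
    simp only [id]
    ring
  · have hE : 1 ≤ expTrunc (n + 1) (6 * w / 5) := by
      simpa [expTrunc] using expTrunc_mono (by positivity : (0 : ℝ) ≤ 6 * w / 5) (zero_le (n + 1))
    linarith
  · have hkey := mul_expTrunc_le (by positivity : (0 : ℝ) ≤ 6 * w / 5) n
    linear_combination (5 / 6 : ℝ) * hkey

theorem stmt_4_general (C : ℕ) (w w' : ℝ) (hw : 0 < w) (hww' : w ≤ w') :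
    (1 - (1 / 6 + (5 / 6) * ∑ q ∈ Finset.range (C + 1),
        (1 / (Nat.factorial q : ℝ)) * (6 * w / 5) ^ q)⁻¹) / w
      ≥ (1 - (1 / 6 + (5 / 6) * ∑ q ∈ Finset.range (C + 1),
        (1 / (Nat.factorial q : ℝ)) * (6 * w' / 5) ^ q)⁻¹) / w' :=
  antitoneOn_g₂ C hw (hw.trans_le hww') hww'

/-- Fact C.4: `g₂(C, w) = (1 - (1/6 + (5/6)∑_{q=0}^C (6w/5)^q/q!)⁻¹)/w` is monotone
decreasing in `w`. -/
theorem stmt_4 (C : ℕ) (hC : 0 < C) (w w' : ℝ) (hw : 0 < w) (hww' : w ≤ w') :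
    (1 - (1 / 6 + (5 / 6) * ∑ q ∈ Finset.range (C + 1),
        (1 / (Nat.factorial q : ℝ)) * (6 * w / 5) ^ q)⁻¹) / w
      ≥ (1 - (1 / 6 + (5 / 6) * ∑ q ∈ Finset.range (C + 1),
        (1 / (Nat.factorial q : ℝ)) * (6 * w' / 5) ^ q)⁻¹) / w' :=
  stmt_4_general C w w' hw hww'
end

section
/- For all real x > 0, (1 − (1 + Σ_{q=1}^{∞} Π_{r=1}^{q} x/(r + x/min{1, x}))^{−1}) / min{1, x} ≥ 1 − 1/(e − 1), where the infinite series Σ_{q=1}^{∞} Π_{r=1}^{q} x/(r + x/min{1, x}) converges. -/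
open Finset Nat

private lemma exp_tsum (y : ℝ) : Real.exp y = ∑' n : ℕ, y ^ n / n ! := by
  rw [Real.exp_eq_exp_ℝ, NormedSpace.exp_eq_tsum_div]

private lemma prod_div_id (x : ℝ) (n : ℕ) :
    ∏ r ∈ Finset.Icc 1 n, x / (r : ℝ) = x ^ n / n ! := by
  induction n with
  | zero => simp
  | succ n ih =>
      rw [Finset.prod_Icc_succ_top (by omega), ih]
      have h : ((n ! : ℝ)) ≠ 0 := Nat.cast_ne_zero.2 n.factorial_ne_zero
      rw [Nat.factorial_succ]
      push_cast
      field_simp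
      ring

private lemma prod_div_succ (x : ℝ) (n : ℕ) :
    ∏ r ∈ Finset.Icc 1 n, x / ((r : ℝ) + 1) = x ^ n / (n + 1)! := by
  induction n with
  | zero => simp
  | succ n ih =>
      rw [Finset.prod_Icc_succ_top (by omega), ih]
      have h : (((n + 1)! : ℝ)) ≠ 0 := Nat.cast_ne_zero.2 (n + 1).factorial_ne_zero
      rw [show n + 1 + 1 = n + 2 by ring, Nat.factorial_succ (n + 1)]
      push_cast
      field_simp
      ring

private lemma summable_tail2 (y : ℝ) :
    Summable (fun q : ℕ => y ^ (q + 2) / (q + 2)!) :=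
  (summable_nat_add_iff 2).mpr (Real.summable_pow_div_factorial y)

private lemma tail2 (y : ℝ) :
    ∑' q : ℕ, y ^ (q + 2) / (q + 2)! = Real.exp y - 1 - y := by
  have hs := Real.summable_pow_div_factorial y
  have h := Summable.sum_add_tsum_nat_add 2 hs
  have hr : ∑ i ∈ Finset.range 2, y ^ i / i ! = 1 + y := by
    simp [Finset.sum_range_succ]
  rw [hr, ← exp_tsum y] at h
  linarith

/-- monotonicity key: for `0 < y ≤ 1`, `1 - 1/(e-1) ≤ 1/y - 1/(e^y - 1)`. -/
private lemma key_mono (y : ℝ) (hy : 0 < y) (hy1 : y ≤ 1) :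
    1 - 1 / (Real.exp 1 - 1) ≤ y⁻¹ - (Real.exp y - 1)⁻¹ := by
  have hEpos : ∀ z : ℝ, 0 < z → 0 < Real.exp z - 1 := by
    intro z hz
    have := Real.add_one_lt_exp (ne_of_gt hz)
    linarith
  set f : ℝ → ℝ := fun z => z⁻¹ - (Real.exp z - 1)⁻¹ with hf
  have hderiv : ∀ z ∈ interior (Set.Ioi (0 : ℝ)), deriv f z < 0 := by
    intro z hz
    rw [interior_Ioi] at hz
    have hzpos : (0 : ℝ) < z := hz
    have hEz : Real.exp z - 1 ≠ 0 := ne_of_gt (hEpos z hzpos)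
    have h1 : HasDerivAt (fun w : ℝ => w⁻¹) (-(z ^ 2)⁻¹) z := hasDerivAt_inv (ne_of_gt hzpos)
    have h2 : HasDerivAt (fun w : ℝ => (Real.exp w - 1)⁻¹)
        (-(Real.exp z) / (Real.exp z - 1) ^ 2) z :=
      ((Real.hasDerivAt_exp z).sub_const 1).inv hEz
    have hd : HasDerivAt f (-(z ^ 2)⁻¹ - -(Real.exp z) / (Real.exp z - 1) ^ 2) z := h1.sub h2
    rw [hd.deriv, show -(z ^ 2)⁻¹ - -Real.exp z / (Real.exp z - 1) ^ 2
      = Real.exp z / (Real.exp z - 1) ^ 2 - (z ^ 2)⁻¹ from by ring]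
    -- key inequality: z^2 * exp z < (exp z - 1)^2
    have hkey : z ^ 2 * Real.exp z < (Real.exp z - 1) ^ 2 := by
      have hs : z / 2 < Real.sinh (z / 2) := Real.self_lt_sinh_iff.2 (by positivity)
      rw [Real.sinh_eq] at hs
      set A : ℝ := Real.exp (z / 2) with hA
      have hApos : 0 < A := Real.exp_pos _
      have hAA : A * A = Real.exp z := by
        rw [hA, ← Real.exp_add]; ring_nf
      have hinv : Real.exp (-(z / 2)) = A⁻¹ := by rw [Real.exp_neg]
      rw [hinv] at hs
      have hzA : z * A < A * A - 1 := by
        have h' : z < A - A⁻¹ := by linarith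
        have := mul_lt_mul_of_pos_right h' hApos
        rw [sub_mul, inv_mul_cancel₀ (ne_of_gt hApos)] at this
        linarith
      have hzApos : 0 < z * A := by positivity
      have hsq : (z * A) * (z * A) < (A * A - 1) * (A * A - 1) :=
        mul_self_lt_mul_self (le_of_lt hzApos) hzA
      rw [← hAA]
      nlinarith [hsq]
    have hmain : Real.exp z / (Real.exp z - 1) ^ 2 < (z ^ 2)⁻¹ := by
      rw [inv_eq_one_div, div_lt_div_iff₀ (by positivity) (by positivity)]
      nlinarith [hkey]
    linarith
  have hcont : ContinuousOn f (Set.Ioi (0 : ℝ)) := by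
    apply ContinuousOn.sub
    · exact ContinuousOn.inv₀ continuousOn_id fun z hz => ne_of_gt hz
    · exact ContinuousOn.inv₀ ((Real.continuous_exp.continuousOn).sub continuousOn_const)
        fun z hz => ne_of_gt (hEpos z hz)
  have hanti : StrictAntiOn f (Set.Ioi (0 : ℝ)) :=
    strictAntiOn_of_deriv_neg (convex_Ioi 0) hcont hderiv
  have hy' : y ∈ Set.Ioi (0 : ℝ) := hy
  have h1' : (1 : ℝ) ∈ Set.Ioi (0 : ℝ) := by norm_num
  have hle : f 1 ≤ f y := by
    rcases eq_or_lt_of_le hy1 with h | h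
    · rw [h]
    · exact le_of_lt (hanti hy' h1' h)
  have hf1 : f 1 = 1 - 1 / (Real.exp 1 - 1) := by
    simp [hf, one_div]
  rw [hf1] at hle
  exact hle

/-- Claim B.3: the availability-to-normalization ratio of the unbounded-capacity
birth–death chain with birth rate `x` and death rates `r + x / min 1 x` is at
least `1 - 1/(e-1)`. -/
theorem stmt_5 (x : ℝ) (hx : 0 < x) :
    Summable (fun q : ℕ => ∏ r ∈ Finset.Icc 1 (q + 1), x / ((r : ℝ) + x / min 1 x)) ∧
    (1 - (1 + ∑' q : ℕ, ∏ r ∈ Finset.Icc 1 (q + 1), x / ((r : ℝ) + x / min 1 x))⁻¹)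
        / min 1 x ≥ 1 - 1 / (Real.exp 1 - 1) := by
  have hmpos : 0 < min 1 x := lt_min one_pos hx
  -- summability
  have hnn : ∀ q : ℕ, 0 ≤ ∏ r ∈ Finset.Icc 1 (q + 1), x / ((r : ℝ) + x / min 1 x) := by
    intro q
    apply Finset.prod_nonneg
    intro r hr
    have hr1 : 1 ≤ r := (Finset.mem_Icc.1 hr).1
    have : (0 : ℝ) < (r : ℝ) + x / min 1 x := by positivity
    positivity
  have hub : ∀ q : ℕ, ∏ r ∈ Finset.Icc 1 (q + 1), x / ((r : ℝ) + x / min 1 x)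
      ≤ x ^ (q + 1) / (q + 1)! := by
    intro q
    rw [← prod_div_id x (q + 1)]
    apply Finset.prod_le_prod
    · intro r hr
      have hr1 : 1 ≤ r := (Finset.mem_Icc.1 hr).1
      have : (0 : ℝ) < (r : ℝ) + x / min 1 x := by positivity
      positivity
    · intro r hr
      have hr1 : 1 ≤ r := (Finset.mem_Icc.1 hr).1
      have hrpos : (0 : ℝ) < (r : ℝ) := by exact_mod_cast hr1
      have hd0 : 0 < x / min 1 x := div_pos hx (lt_min one_pos hx)
      rw [div_le_div_iff₀ (by positivity) hrpos]
      nlinarith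
  have hsummable : Summable
      (fun q : ℕ => ∏ r ∈ Finset.Icc 1 (q + 1), x / ((r : ℝ) + x / min 1 x)) := by
    apply Summable.of_nonneg_of_le hnn hub
    exact (summable_nat_add_iff 1).mpr (Real.summable_pow_div_factorial x)
  refine ⟨hsummable, ?_⟩
  rcases le_or_gt 1 x with hx1 | hx1
  · -- case x ≥ 1
    have hmin : min 1 x = 1 := min_eq_left hx1
    have hlb : ∀ q : ℕ, ((q + 2)! : ℝ)⁻¹
        ≤ ∏ r ∈ Finset.Icc 1 (q + 1), x / ((r : ℝ) + x / min 1 x) := by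
      intro q
      have h1 : (((q + 2)! : ℝ))⁻¹ = ∏ r ∈ Finset.Icc 1 (q + 1), (1 : ℝ) / ((r : ℝ) + 1) := by
        rw [prod_div_succ 1 (q + 1), show q + 1 + 1 = q + 2 by ring, one_pow, one_div]
      rw [h1, hmin]
      apply Finset.prod_le_prod
      · intro r hr
        have hr1 : 1 ≤ r := (Finset.mem_Icc.1 hr).1
        positivity
      · intro r hr
        have hr1 : 1 ≤ r := (Finset.mem_Icc.1 hr).1
        have hrpos : (0 : ℝ) < (r : ℝ) := by exact_mod_cast hr1
        have hr1' : (1 : ℝ) ≤ (r : ℝ) := by exact_mod_cast hr1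
        rw [div_le_div_iff₀ (by positivity) (by positivity), div_one]
        nlinarith
    have hsum_lb : Summable (fun q : ℕ => ((q + 2)! : ℝ)⁻¹) := by
      have := summable_tail2 1
      simpa using this
    have htsum_lb : ∑' q : ℕ, ((q + 2)! : ℝ)⁻¹ = Real.exp 1 - 2 := by
      have := tail2 1
      simp only [one_pow] at this
      rw [show Real.exp 1 - 2 = Real.exp 1 - 1 - 1 from by ring, ← this]
      apply tsum_congr
      intro q
      rw [one_div]
    have hS : Real.exp 1 - 2 ≤
        ∑' q : ℕ, ∏ r ∈ Finset.Icc 1 (q + 1), x / ((r : ℝ) + x / min 1 x) := by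
      rw [← htsum_lb]
      exact Summable.tsum_le_tsum hlb hsum_lb hsummable
    set S := ∑' q : ℕ, ∏ r ∈ Finset.Icc 1 (q + 1), x / ((r : ℝ) + x / min 1 x)
    have he : (2.7182818283 : ℝ) < Real.exp 1 := Real.exp_one_gt_d9
    have h1S : (0 : ℝ) < Real.exp 1 - 1 := by linarith
    have h2S : Real.exp 1 - 1 ≤ 1 + S := by linarith
    have hinv : (1 + S)⁻¹ ≤ (Real.exp 1 - 1)⁻¹ :=
      inv_anti₀ h1S h2S
    rw [hmin, div_one, ge_iff_le, one_div]
    linarith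
  · -- case x < 1
    have hmin : min 1 x = x := min_eq_right (le_of_lt hx1)
    have hterm : ∀ q : ℕ, ∏ r ∈ Finset.Icc 1 (q + 1), x / ((r : ℝ) + x / min 1 x)
        = x ^ (q + 1) / (q + 2)! := by
      intro q
      rw [hmin, div_self (ne_of_gt hx), ← show q + 1 + 1 = q + 2 by ring,
        ← prod_div_succ x (q + 1)]
    have hTS : ∑' q : ℕ, ∏ r ∈ Finset.Icc 1 (q + 1), x / ((r : ℝ) + x / min 1 x)
        = ∑' q : ℕ, x ^ (q + 1) / (q + 2)! := tsum_congr hterm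
    set S := ∑' q : ℕ, x ^ (q + 1) / (q + 2)! with hSdef
    have hxS : x * S = Real.exp x - 1 - x := by
      rw [hSdef, ← tsum_mul_left]
      have : ∀ q : ℕ, x * (x ^ (q + 1) / (q + 2)!) = x ^ (q + 2) / (q + 2)! := by
        intro q
        rw [show q + 2 = (q + 1) + 1 by ring, pow_succ]
        ring
      rw [tsum_congr this]
      exact tail2 x
    have hEpos : 0 < Real.exp x - 1 := by
      have := Real.add_one_lt_exp (ne_of_gt hx)
      linarith
    have h1S : 1 + S = (Real.exp x - 1) / x := by
      rw [eq_div_iff (ne_of_gt hx)]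
      nlinarith [hxS]
    rw [hTS, h1S, inv_div, hmin]
    have halg : (1 - x / (Real.exp x - 1)) / x = x⁻¹ - (Real.exp x - 1)⁻¹ := by
      field_simp
    rw [halg, ge_iff_le]
    exact key_mono x hx (le_of_lt hx1)
end

section
/- For all real x ≥ 1, 1 + Σ_{q=1}^{∞} Π_{r=1}^{q} x/(r + x) ≥ e − 1, where the series converges. -/
open Finset

lemma aux_fact (m : ℕ) : ∏ r ∈ Finset.Icc 1 m, ((r : ℝ) + 1) = (Nat.factorial (m + 1) : ℝ) := by
  induction m with
  | zero => simp
  | succ n ih =>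
    rw [Finset.prod_Icc_succ_top (Nat.le_add_left 1 n), ih]
    push_cast [Nat.factorial_succ]; ring

lemma exp_one_tsum : Real.exp 1 = ∑' n : ℕ, 1 / (Nat.factorial n : ℝ) := by
  rw [Real.exp_eq_exp_ℝ, NormedSpace.exp_eq_tsum_div]
  simp

/-- First case of the proof of Claim B.3: for `x ≥ 1`,
`1 + ∑_{q=1}^∞ ∏_{r=1}^q x/(r+x) ≥ e - 1`. -/
theorem stmt_6 (x : ℝ) (hx : 1 ≤ x) :
    Summable (fun q : ℕ => ∏ r ∈ Finset.Icc 1 (q + 1), x / ((r : ℝ) + x)) ∧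
    1 + ∑' q : ℕ, ∏ r ∈ Finset.Icc 1 (q + 1), x / ((r : ℝ) + x) ≥ Real.exp 1 - 1 := by
  have hx0 : (0 : ℝ) < x := lt_of_lt_of_le one_pos hx
  set f : ℕ → ℝ := fun q => ∏ r ∈ Finset.Icc 1 (q + 1), x / ((r : ℝ) + x) with hf
  have hpos : ∀ r : ℕ, (0 : ℝ) < (r : ℝ) + x := fun r => by positivity
  have hnonneg : ∀ q, 0 ≤ f q := fun q =>
    Finset.prod_nonneg fun r _ => div_nonneg hx0.le (hpos r).le
  set c : ℝ := x / (1 + x) with hc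
  have hc0 : 0 ≤ c := div_nonneg hx0.le (by linarith)
  have hc1 : c < 1 := (div_lt_one (by linarith)).mpr (by linarith)
  have hub : ∀ q, f q ≤ c ^ (q + 1) := by
    intro q
    have : f q ≤ ∏ _r ∈ Finset.Icc 1 (q + 1), c := by
      apply Finset.prod_le_prod
      · exact fun r _ => div_nonneg hx0.le (hpos r).le
      · intro r hr
        have hr1 : (1 : ℕ) ≤ r := (Finset.mem_Icc.mp hr).1
        have : (1 : ℝ) + x ≤ (r : ℝ) + x := by
          have : (1 : ℝ) ≤ (r : ℝ) := by exact_mod_cast hr1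
          linarith
        rw [hc, div_le_div_iff₀ (hpos r) (by linarith)]
        nlinarith
    simpa [Nat.card_Icc] using this
  have hsum : Summable f := by
    apply Summable.of_nonneg_of_le hnonneg hub
    exact ((summable_geometric_of_lt_one hc0 hc1).mul_left c).congr fun i => (pow_succ' c i).symm
  refine ⟨hsum, ?_⟩
  set b : ℕ → ℝ := fun q => 1 / (Nat.factorial (q + 2) : ℝ) with hb
  have hbf : ∀ q, b q ≤ f q := by
    intro q
    have h1 : ∏ r ∈ Finset.Icc 1 (q + 1), (1 : ℝ) / ((r : ℝ) + 1) = b q := by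
      rw [Finset.prod_div_distrib, Finset.prod_const_one, aux_fact]
    rw [← h1]
    apply Finset.prod_le_prod
    · intro r _; positivity
    · intro r _
      rw [div_le_div_iff₀ (by positivity) (hpos r)]
      have : (0 : ℝ) ≤ (r : ℝ) := Nat.cast_nonneg r
      nlinarith
  have hbsum : Summable b := Summable.of_nonneg_of_le (fun q => by positivity) hbf hsum
  have hle : ∑' q, b q ≤ ∑' q, f q := Summable.tsum_le_tsum hbf hbsum hsum
  -- compute ∑' b = e - 2
  have hgsum : Summable (fun n : ℕ => 1 / (Nat.factorial n : ℝ)) := by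
    simpa using Real.summable_pow_div_factorial 1
  have h0 : ∑' n : ℕ, 1 / (Nat.factorial n : ℝ)
      = 1 + ∑' n : ℕ, 1 / (Nat.factorial (n + 1) : ℝ) := by
    rw [Summable.tsum_eq_zero_add hgsum]; simp
  have hgsum1 : Summable (fun n : ℕ => 1 / (Nat.factorial (n + 1) : ℝ)) :=
    hgsum.comp_injective (add_left_injective 1)
  have h1 : ∑' n : ℕ, 1 / (Nat.factorial (n + 1) : ℝ)
      = 1 + ∑' n : ℕ, 1 / (Nat.factorial (n + 2) : ℝ) := by
    rw [Summable.tsum_eq_zero_add hgsum1]; simp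
  have hbval : ∑' q, b q = Real.exp 1 - 2 := by
    rw [hb]
    have := exp_one_tsum
    rw [this, h0, h1]; ring
  rw [hbval] at hle
  linarith
end

section
/- For all real x with 0 < x ≤ 1, 1/x − 1/(e^x − 1) ≥ 1 − 1/(e − 1). -/
/-!
The function `f y = 1 / y - 1 / (exp y - 1)` is strictly decreasing on `(0, ∞)`, so on `(0, 1]`
it is bounded below by `f 1`. Its derivative `exp y / (exp y - 1) ^ 2 - 1 / y ^ 2` is negative
because `exp y - 1 = 2 exp (y / 2) sinh (y / 2) > y exp (y / 2)`.
-/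

open Real Set

lemma mul_exp_half_lt_exp_sub_one {t : ℝ} (ht : 0 < t) : t * exp (t / 2) < exp t - 1 := by
  have hsinh : t / 2 < sinh (t / 2) := self_lt_sinh_iff.mpr (half_pos ht)
  have hsplit : exp t - 1 = exp (t / 2) * (2 * sinh (t / 2)) := by
    have hsq : exp (t / 2) * exp (t / 2) = exp t := by rw [← exp_add, add_halves]
    have hinv : exp (t / 2) * exp (-(t / 2)) = 1 := by rw [← exp_add, add_neg_cancel, exp_zero]
    rw [sinh_eq]
    linear_combination hinv - hsq
  rw [hsplit]
  nlinarith [exp_pos (t / 2)]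

lemma sq_mul_exp_lt_sq_exp_sub_one {t : ℝ} (ht : 0 < t) : t ^ 2 * exp t < (exp t - 1) ^ 2 := by
  have hsq : (t * exp (t / 2)) ^ 2 = t ^ 2 * exp t := by
    rw [mul_pow, ← exp_nat_mul]
    ring_nf
  rw [← hsq]
  exact pow_lt_pow_left₀ (mul_exp_half_lt_exp_sub_one ht) (by positivity) two_ne_zero

lemma hasDerivAt_one_div_sub_one_div_exp_sub_one {t : ℝ} (ht : t ≠ 0) :
    HasDerivAt (fun y ↦ 1 / y - 1 / (exp y - 1))
      (-(t ^ 2)⁻¹ + exp t / (exp t - 1) ^ 2) t := by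
  have hexp : exp t - 1 ≠ 0 := sub_ne_zero.mpr ((exp_eq_one_iff t).not.mpr ht)
  simp only [one_div]
  exact ((hasDerivAt_inv ht).sub (((hasDerivAt_exp t).sub_const 1).inv hexp)).congr_deriv
    (by ring)

lemma strictAntiOn_one_div_sub_one_div_exp_sub_one :
    StrictAntiOn (fun y ↦ 1 / y - 1 / (exp y - 1)) (Ioi 0) := by
  have hderiv : ∀ t ∈ Ioi (0 : ℝ), HasDerivAt (fun y ↦ 1 / y - 1 / (exp y - 1))
      (-(t ^ 2)⁻¹ + exp t / (exp t - 1) ^ 2) t :=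
    fun t ht ↦ hasDerivAt_one_div_sub_one_div_exp_sub_one (ne_of_gt ht)
  refine strictAntiOn_of_deriv_neg (convex_Ioi 0)
    (fun t ht ↦ (hderiv t ht).continuousAt.continuousWithinAt) fun t ht ↦ ?_
  rw [interior_Ioi] at ht
  have ht0 : (0 : ℝ) < t := ht
  rw [(hderiv t ht).deriv, neg_add_lt_iff_lt_add, add_zero,
    div_lt_iff₀ (pow_pos (sub_pos.mpr (one_lt_exp_iff.mpr ht0)) 2), ← div_eq_inv_mul,
    lt_div_iff₀ (pow_pos ht0 2), mul_comm]
  exact sq_mul_exp_lt_sq_exp_sub_one ht0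

/-- Second case of the proof of Claim B.3. -/
theorem stmt_7 (x : ℝ) (hx0 : 0 < x) (hx1 : x ≤ 1) :
    1 / x - 1 / (Real.exp x - 1) ≥ 1 - 1 / (Real.exp 1 - 1) := by
  simpa only [div_one] using
    strictAntiOn_one_div_sub_one_div_exp_sub_one.antitoneOn hx0 (hx0.trans_le hx1) hx1
end

section
/- For all real λ > 0, λ / ((1 − e^{−λ}) · (λ + 1) + λ) ≥ 0.435. -/
set_option maxHeartbeats 1000000

open Real Finset

private lemma sqstep {x b c : ℝ} (hb : 0 ≤ b) (h : b ≤ Real.exp x) (hc : c ≤ b^2) :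
    c ≤ Real.exp (2*x) := by
  have he : Real.exp (2*x) = Real.exp x ^ 2 := by rw [two_mul, Real.exp_add, sq]
  rw [he]
  calc c ≤ b^2 := hc
    _ ≤ Real.exp x ^ 2 := pow_le_pow_left₀ hb h 2

private lemma exp_1793_lb : (0.1664 : ℝ) ≤ Real.exp (-1.793) := by
  have h0 : (8190207/8192000 : ℝ) ≤ Real.exp (-(1.793/8192)) := by
    have := Real.add_one_le_exp (-(1.793/8192) : ℝ); linarith [this]
  have h1 : (499781151882179/500000000000000 : ℝ) ≤ Real.exp (-(1.793/4096)) := by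
    have heq : (-(1.793/4096) : ℝ) = 2 * (-(1.793/8192)) := by norm_num
    rw [heq]
    exact sqstep (by norm_num) h0 (by norm_num)
  have h2 : (99912479910671/100000000000000 : ℝ) ≤ Real.exp (-(1.793/2048)) := by
    have heq : (-(1.793/2048) : ℝ) = 2 * (-(1.793/4096)) := by norm_num
    rw [heq]
    exact sqstep (by norm_num) h1 (by norm_num)
  have h3 : (998250364190023/1000000000000000 : ℝ) ≤ Real.exp (-(1.793/1024)) := by
    have heq : (-(1.793/1024) : ℝ) = 2 * (-(1.793/2048)) := by norm_num
    rw [heq]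
    exact sqstep (by norm_num) h2 (by norm_num)
  have h4 : (996503789605513/1000000000000000 : ℝ) ≤ Real.exp (-(1.793/512)) := by
    have heq : (-(1.793/512) : ℝ) = 2 * (-(1.793/1024)) := by norm_num
    rw [heq]
    exact sqstep (by norm_num) h3 (by norm_num)
  have h5 : (248254950674537/250000000000000 : ℝ) ≤ Real.exp (-(1.793/256)) := by
    have heq : (-(1.793/256) : ℝ) = 2 * (-(1.793/512)) := by norm_num
    rw [heq]
    exact sqstep (by norm_num) h4 (by norm_num)
  have h6 : (246522082137667/250000000000000 : ℝ) ≤ Real.exp (-(1.793/128)) := by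
    have heq : (-(1.793/128) : ℝ) = 2 * (-(1.793/256)) := by norm_num
    rw [heq]
    exact sqstep (by norm_num) h5 (by norm_num)
  have h7 : (19447403834077/20000000000000 : ℝ) ≤ Real.exp (-(1.793/64)) := by
    have heq : (-(1.793/64) : ℝ) = 2 * (-(1.793/128)) := by norm_num
    rw [heq]
    exact sqstep (by norm_num) h6 (by norm_num)
  have h8 : (945503789714181/1000000000000000 : ℝ) ≤ Real.exp (-(1.793/32)) := by
    have heq : (-(1.793/32) : ℝ) = 2 * (-(1.793/64)) := by norm_num
    rw [heq]
    exact sqstep (by norm_num) h7 (by norm_num)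
  have h9 : (446988708181939/500000000000000 : ℝ) ≤ Real.exp (-(1.793/16)) := by
    have heq : (-(1.793/16) : ℝ) = 2 * (-(1.793/32)) := by norm_num
    rw [heq]
    exact sqstep (by norm_num) h8 (by norm_num)
  have h10 : (399597810484317/500000000000000 : ℝ) ≤ Real.exp (-(1.793/8)) := by
    have heq : (-(1.793/8) : ℝ) = 2 * (-(1.793/16)) := by norm_num
    rw [heq]
    exact sqstep (by norm_num) h9 (by norm_num)
  have h11 : (7983920507193/12500000000000 : ℝ) ≤ Real.exp (-(1.793/4)) := by
    have heq : (-(1.793/4) : ℝ) = 2 * (-(1.793/8)) := by norm_num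
    rw [heq]
    exact sqstep (by norm_num) h10 (by norm_num)
  have h12 : (101988778664283/250000000000000 : ℝ) ≤ Real.exp (-(1.793/2)) := by
    have heq : (-(1.793/2) : ℝ) = 2 * (-(1.793/4)) := by norm_num
    rw [heq]
    exact sqstep (by norm_num) h11 (by norm_num)
  have h13 : (166427375574913/1000000000000000 : ℝ) ≤ Real.exp (-(1.793/1)) := by
    have heq : (-(1.793/1) : ℝ) = 2 * (-(1.793/2)) := by norm_num
    rw [heq]
    exact sqstep (by norm_num) h12 (by norm_num)
  have heq : (-(1.793:ℝ)) = -(1.793/1) := by norm_num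
  rw [heq]
  linarith [h13]

private lemma exp_3_lb : (0.0497 : ℝ) ≤ Real.exp (-3) := by
  have h1 : Real.exp 1 < 2.7182818286 := Real.exp_one_lt_d9
  have h3 : Real.exp 3 = (Real.exp 1)^3 := by
    rw [show (3:ℝ) = ((3:ℕ):ℝ) * 1 by norm_num, Real.exp_nat_mul]
  have hpos : (0:ℝ) < Real.exp 1 := Real.exp_pos 1
  have h4 : Real.exp 3 < 2.7182818286^3 := by
    rw [h3]; exact pow_lt_pow_left₀ h1 hpos.le (by norm_num)
  have h5 : Real.exp (-3) * Real.exp 3 = 1 := by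
    rw [← Real.exp_add]; norm_num
  nlinarith [Real.exp_pos 3, Real.exp_pos (-3)]

private lemma exp_neg_lb4 (t : ℝ) (ht : |t| ≤ 1) :
    1 - t + t^2/2 - t^3/6 - 5*t^4/96 ≤ Real.exp (-t) := by
  have h := Real.exp_bound (x := -t) (by rwa [abs_neg]) (n := 4) (by norm_num)
  have h2 : |Real.exp (-t) - (1 - t + t^2/2 - t^3/6)| ≤ t^4 * (5/96) := by
    convert h using 2
    · simp [Finset.sum_range_succ, Nat.factorial]; ring
    · rw [abs_neg, ← abs_pow, abs_of_nonneg (by positivity : (0:ℝ) ≤ t^4)]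
    · norm_num [Nat.factorial]
  have := abs_le.mp h2
  linarith [this.1]

private lemma exp_neg_lb6 (x : ℝ) (h0 : 0 ≤ x) (h1 : x ≤ 1) :
    1 - x + x^2/2 - x^3/6 + x^4/24 - x^5/120 - 7*x^6/4320 ≤ Real.exp (-x) := by
  have h := Real.exp_bound (x := -x) (by rw [abs_neg]; rwa [abs_of_nonneg h0]) (n := 6) (by norm_num)
  have h2 : |Real.exp (-x) - (1 - x + x^2/2 - x^3/6 + x^4/24 - x^5/120)| ≤ x^6 * (7/4320) := by
    convert h using 2
    · simp [Finset.sum_range_succ, Nat.factorial]; ring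
    · rw [abs_neg, ← abs_pow, abs_of_nonneg (by positivity : (0:ℝ) ≤ x^6)]
    · norm_num [Nat.factorial]
  have := abs_le.mp h2
  linarith [this.1]

private lemma key_ineq (l : ℝ) (hl : 0 < l) :
    0 ≤ 0.13 * l + 0.435 * ((l + 1) * Real.exp (-l)) - 0.435 := by
  rcases le_or_gt l 0.793 with hA | hA
  · -- small region via degree-6 Taylor bound
    have hexp := exp_neg_lb6 l hl.le (by linarith)
    have hmul : (l+1) * (1 - l + l^2/2 - l^3/6 + l^4/24 - l^5/120 - 7*l^6/4320)
        ≤ (l+1) * Real.exp (-l) :=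
      mul_le_mul_of_nonneg_left hexp (by linarith)
    have hx : (0:ℝ) ≤ l := hl.le
    have hy : (0:ℝ) ≤ 0.793 - l := by linarith
    linarith [hmul,
      mul_nonneg (pow_nonneg hx 1) (pow_nonneg hy 6),
      mul_nonneg (pow_nonneg hx 2) (pow_nonneg hy 5),
      mul_nonneg (pow_nonneg hx 3) (pow_nonneg hy 4),
      mul_nonneg (pow_nonneg hx 4) (pow_nonneg hy 3),
      mul_nonneg (pow_nonneg hx 5) (pow_nonneg hy 2),
      mul_nonneg (pow_nonneg hx 6) (pow_nonneg hy 1),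
      pow_nonneg hx 7]
  rcases le_or_gt l 2.793 with hB | hB
  · -- central region around the minimum
    have hm1 : (-1:ℝ) ≤ l - 1.793 := by linarith
    have hp1 : (l - 1.793 : ℝ) ≤ 1 := by linarith
    have htabs : |l - 1.793| ≤ 1 := abs_le.mpr ⟨hm1, hp1⟩
    have hexp := exp_neg_lb4 (l - 1.793) htabs
    have hu : (0:ℝ) ≤ l - 1.793 + 1 := by linarith
    have hv : (0:ℝ) ≤ 1 - (l - 1.793) := by linarith
    have hBpos : (0:ℝ) ≤ 1 - (l-1.793) + (l-1.793)^2/2 - (l-1.793)^3/6 - 5*(l-1.793)^4/96 := by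
      nlinarith [mul_nonneg (pow_nonneg hu 1) (pow_nonneg hv 3),
        mul_nonneg (pow_nonneg hu 2) (pow_nonneg hv 2),
        mul_nonneg (pow_nonneg hu 3) (pow_nonneg hv 1),
        pow_nonneg hu 4, pow_nonneg hv 4]
    have hsplit : Real.exp (-l) = Real.exp (-1.793) * Real.exp (-(l-1.793)) := by
      rw [← Real.exp_add]; congr 1; ring
    have hE : (0.1664 : ℝ) * (1 - (l-1.793) + (l-1.793)^2/2 - (l-1.793)^3/6 - 5*(l-1.793)^4/96)
        ≤ Real.exp (-l) := by
      rw [hsplit]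
      exact mul_le_mul exp_1793_lb hexp hBpos (Real.exp_pos _).le
    have hmul : (l+1) * (0.1664 * (1 - (l-1.793) + (l-1.793)^2/2 - (l-1.793)^3/6 - 5*(l-1.793)^4/96))
        ≤ (l+1) * Real.exp (-l) :=
      mul_le_mul_of_nonneg_left hE (by linarith)
    rcases le_or_gt l 1.4 with h1 | h1
    · -- [0.793, 1.4]
      have hx : (0:ℝ) ≤ l - 0.793 := by linarith
      have hy : (0:ℝ) ≤ 1.4 - l := by linarith
      linarith [hmul,
        mul_nonneg (pow_nonneg hx 1) (pow_nonneg hy 4),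
        mul_nonneg (pow_nonneg hx 2) (pow_nonneg hy 3),
        mul_nonneg (pow_nonneg hx 3) (pow_nonneg hy 2),
        mul_nonneg (pow_nonneg hx 4) (pow_nonneg hy 1),
        pow_nonneg hx 5, pow_nonneg hy 5]
    rcases le_or_gt l 1.7 with h2 | h2
    · -- [1.4, 1.7]
      have hx : (0:ℝ) ≤ l - 1.4 := by linarith
      have hy : (0:ℝ) ≤ 1.7 - l := by linarith
      linarith [hmul,
        mul_nonneg (pow_nonneg hx 1) (pow_nonneg hy 4),
        mul_nonneg (pow_nonneg hx 2) (pow_nonneg hy 3),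
        mul_nonneg (pow_nonneg hx 3) (pow_nonneg hy 2),
        mul_nonneg (pow_nonneg hx 4) (pow_nonneg hy 1),
        pow_nonneg hx 5, pow_nonneg hy 5]
    rcases le_or_gt l 1.9 with h3 | h3
    · -- [1.7, 1.9]
      have hx : (0:ℝ) ≤ l - 1.7 := by linarith
      have hy : (0:ℝ) ≤ 1.9 - l := by linarith
      linarith [hmul,
        mul_nonneg (pow_nonneg hx 1) (pow_nonneg hy 4),
        mul_nonneg (pow_nonneg hx 2) (pow_nonneg hy 3),
        mul_nonneg (pow_nonneg hx 3) (pow_nonneg hy 2),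
        mul_nonneg (pow_nonneg hx 4) (pow_nonneg hy 1),
        pow_nonneg hx 5, pow_nonneg hy 5]
    rcases le_or_gt l 2.2 with h4 | h4
    · -- [1.9, 2.2]
      have hx : (0:ℝ) ≤ l - 1.9 := by linarith
      have hy : (0:ℝ) ≤ 2.2 - l := by linarith
      linarith [hmul,
        mul_nonneg (pow_nonneg hx 1) (pow_nonneg hy 4),
        mul_nonneg (pow_nonneg hx 2) (pow_nonneg hy 3),
        mul_nonneg (pow_nonneg hx 3) (pow_nonneg hy 2),
        mul_nonneg (pow_nonneg hx 4) (pow_nonneg hy 1),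
        pow_nonneg hx 5, pow_nonneg hy 5]
    · -- [2.2, 2.793]
      have hx : (0:ℝ) ≤ l - 2.2 := by linarith
      have hy : (0:ℝ) ≤ 2.793 - l := by linarith
      linarith [hmul,
        mul_nonneg (pow_nonneg hx 1) (pow_nonneg hy 4),
        mul_nonneg (pow_nonneg hx 2) (pow_nonneg hy 3),
        mul_nonneg (pow_nonneg hx 3) (pow_nonneg hy 2),
        mul_nonneg (pow_nonneg hx 4) (pow_nonneg hy 1),
        pow_nonneg hx 5, pow_nonneg hy 5]
  rcases le_or_gt l 3.35 with hC | hC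
  · -- tangent line at 3
    have hsplit : Real.exp (-l) = Real.exp (-3) * Real.exp (3-l) := by
      rw [← Real.exp_add]; congr 1; ring
    have htang : (4 - l : ℝ) ≤ Real.exp (3-l) := by
      have := Real.add_one_le_exp (3-l : ℝ); linarith
    have hE : (0.0497 : ℝ) * (4 - l) ≤ Real.exp (-l) := by
      rw [hsplit]
      exact mul_le_mul exp_3_lb htang (by linarith) (Real.exp_pos _).le
    have hmul : (l+1) * (0.0497 * (4 - l)) ≤ (l+1) * Real.exp (-l) :=
      mul_le_mul_of_nonneg_left hE (by linarith)
    linarith [hmul, mul_nonneg (by linarith : (0:ℝ) ≤ l - 2.793) (by linarith : (0:ℝ) ≤ 3.35 - l)]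
  · -- large l
    have h1 : (0:ℝ) ≤ (l+1) * Real.exp (-l) :=
      mul_nonneg (by linarith) (Real.exp_pos _).le
    nlinarith [h1]

/-- Quantitative inequality from the proof of Corollary B.2 (α = 1). -/
theorem stmt_11 (l : ℝ) (hl : 0 < l) :
    l / ((1 - Real.exp (-l)) * (l + 1) + l) ≥ 0.435 := by
  have hexp1 : Real.exp (-l) < 1 := by
    rw [Real.exp_lt_one_iff]; linarith
  have hexppos := Real.exp_pos (-l)
  have hD : (0:ℝ) < (1 - Real.exp (-l)) * (l + 1) + l := by
    have : (0:ℝ) < (1 - Real.exp (-l)) * (l + 1) :=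
      mul_pos (by linarith) (by linarith)
    linarith
  rw [ge_iff_le, le_div_iff₀ hD]
  have key := key_ineq l hl
  nlinarith [key]
end

section
/- For every positive integer C, the ratio (1 − (1 + Σ_{q=1}^{C} Π_{r=1}^{q} λ/(r + λ))^{−1}) / (1 − (1 + Σ_{q=1}^{∞} Π_{r=1}^{q} λ/(r + λ))^{−1}) tends to C/(C+1) as the real parameter λ tends to infinity. -/
/-!
Every weight `∏_{r ≤ q} λ / (r + λ)` tends to `1` as `λ → ∞`, so the finite sum over `q ≤ C`
tends to `C` and the numerator to `1 - 1 / (1 + C) = C / (C + 1)`. The series dominates each of its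
partial sums, which tend to their number of terms, so it diverges to `∞` and the denominator tends
to `1`. For fixed `λ > 0` the weights are bounded by the geometric sequence `(λ / (1 + λ)) ^ q`.
-/

open Finset Filter Topology

lemma tendsto_div_add_left_atTop (a : ℝ) : Tendsto (fun l : ℝ => l / (a + l)) atTop (𝓝 1) := by
  have h : Tendsto (fun l : ℝ => 1 - a / (a + l)) atTop (𝓝 (1 - 0)) :=
    tendsto_const_nhds.sub <|
      tendsto_const_nhds.div_atTop (tendsto_atTop_add_const_left _ _ tendsto_id)
  rw [sub_zero] at h
  refine h.congr' ?_
  filter_upwards [eventually_gt_atTop (-a)] with l hl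
  have : a + l ≠ 0 := by linarith
  field_simp
  ring

lemma tendsto_prod_div_add_atTop {ι : Type*} (s : Finset ι) (a : ι → ℝ) :
    Tendsto (fun l : ℝ => ∏ r ∈ s, l / (a r + l)) atTop (𝓝 1) := by
  simpa using tendsto_finsetProd s fun r _ => tendsto_div_add_left_atTop (a r)

lemma prod_Icc_div_add_le_pow {l : ℝ} (hl : 0 ≤ l) (q : ℕ) :
    ∏ r ∈ Icc 1 q, l / ((r : ℝ) + l) ≤ (l / (1 + l)) ^ q := by
  calc ∏ r ∈ Icc 1 q, l / ((r : ℝ) + l)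
      ≤ ∏ _r ∈ Icc 1 q, l / (1 + l) := by
        refine prod_le_prod (fun r _ => by positivity) fun r hr => ?_
        have : (1 : ℝ) ≤ r := by exact_mod_cast (mem_Icc.mp hr).1
        gcongr
    _ = (l / (1 + l)) ^ q := by rw [prod_const, Nat.card_Icc, Nat.add_sub_cancel]

lemma summable_prod_Icc_div_add {l : ℝ} (hl : 0 < l) :
    Summable fun q : ℕ => ∏ r ∈ Icc 1 q, l / ((r : ℝ) + l) := by
  have hratio : l / (1 + l) < 1 := by rw [div_lt_one (by linarith)]; linarith
  exact (summable_geometric_of_lt_one (by positivity) hratio).of_nonneg_of_le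
    (fun q => prod_nonneg fun r _ => by positivity) (prod_Icc_div_add_le_pow hl.le)

lemma tendsto_tsum_atTop_of_tendsto_one {α : Type*} {L : Filter α} {f : ℕ → α → ℝ}
    (hf : ∀ q, Tendsto (f q) L (𝓝 1)) (hf_nonneg : ∀ᶠ x in L, ∀ q, 0 ≤ f q x)
    (hf_sum : ∀ᶠ x in L, Summable fun q => f q x) :
    Tendsto (fun x => ∑' q, f q x) L atTop := by
  refine tendsto_atTop.mpr fun b => ?_
  obtain ⟨N, hN⟩ := exists_nat_gt b
  have hpartial : Tendsto (fun x => ∑ q ∈ range N, f q x) L (𝓝 N) := by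
    simpa using tendsto_finsetSum (range N) fun q _ => hf q
  filter_upwards [hpartial.eventually (eventually_gt_nhds hN), hf_nonneg, hf_sum]
    with x hb hnonneg hsum
  exact hb.le.trans (hsum.sum_le_tsum _ fun q _ => hnonneg q)

theorem stmt_12_general (C : ℕ) :
    (∀ l : ℝ, 0 < l →
      Summable (fun q : ℕ => ∏ r ∈ Finset.Icc 1 (q + 1), l / ((r : ℝ) + l))) ∧
    Filter.Tendsto
      (fun l : ℝ =>
        (1 - (1 + ∑ q ∈ Finset.Icc 1 C, ∏ r ∈ Finset.Icc 1 q, l / ((r : ℝ) + l))⁻¹) /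
        (1 - (1 + ∑' q : ℕ, ∏ r ∈ Finset.Icc 1 (q + 1), l / ((r : ℝ) + l))⁻¹))
      Filter.atTop (nhds ((C : ℝ) / ((C : ℝ) + 1))) := by
  have hsum (l : ℝ) (hl : 0 < l) :
      Summable fun q : ℕ => ∏ r ∈ Icc 1 (q + 1), l / ((r : ℝ) + l) :=
    (summable_prod_Icc_div_add hl).comp_injective (add_left_injective 1)
  refine ⟨hsum, ?_⟩
  have hfinite : Tendsto (fun l : ℝ => ∑ q ∈ Icc 1 C, ∏ r ∈ Icc 1 q, l / ((r : ℝ) + l))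
      atTop (𝓝 C) := by
    simpa using tendsto_finsetSum (Icc 1 C) fun q _ =>
      tendsto_prod_div_add_atTop (Icc 1 q) fun r : ℕ => (r : ℝ)
  have hseries : Tendsto (fun l : ℝ => ∑' q : ℕ, ∏ r ∈ Icc 1 (q + 1), l / ((r : ℝ) + l))
      atTop atTop :=
    tendsto_tsum_atTop_of_tendsto_one
      (fun q => tendsto_prod_div_add_atTop (Icc 1 (q + 1)) fun r : ℕ => (r : ℝ))
      (by filter_upwards [eventually_ge_atTop 0] with l hl q using
        prod_nonneg fun r _ => by positivity)
      (by filter_upwards [eventually_gt_atTop 0] with l hl using hsum l hl)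
  have hlimit : (C : ℝ) / (C + 1) = (1 - (1 + (C : ℝ))⁻¹) / (1 - 0) := by
    field_simp; ring
  rw [hlimit]
  exact (tendsto_const_nhds.sub ((tendsto_const_nhds.add hfinite).inv₀ (by positivity))).div
    (tendsto_const_nhds.sub (tendsto_atTop_add_const_left _ 1 hseries).inv_tendsto_atTop)
    (by norm_num)

/-- Claim C.5 (computational content): the ratio of the capacity-`C`
availability probability to the unbounded-capacity one (birth rate `λ`,
death rates `r + λ`) tends to `C/(C+1)` as `λ → ∞`; both series converge
for every `λ > 0`. -/
theorem stmt_12 (C : ℕ) (hC : 0 < C) :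
    (∀ l : ℝ, 0 < l →
      Summable (fun q : ℕ => ∏ r ∈ Finset.Icc 1 (q + 1), l / ((r : ℝ) + l))) ∧
    Filter.Tendsto
      (fun l : ℝ =>
        (1 - (1 + ∑ q ∈ Finset.Icc 1 C, ∏ r ∈ Finset.Icc 1 q, l / ((r : ℝ) + l))⁻¹) /
        (1 - (1 + ∑' q : ℕ, ∏ r ∈ Finset.Icc 1 (q + 1), l / ((r : ℝ) + l))⁻¹))
      Filter.atTop (nhds ((C : ℝ) / ((C : ℝ) + 1))) :=
  stmt_12_general C
end

section
/- As the real parameter λ tends to infinity (through λ ≥ 2), the quantity 1 − (1 + Σ_{q=1}^{∞} Π_{r=1}^{q} λ/(r·(λ − 1) + 1))^{−1} tends to 1 − 1/e, where the series converges for every λ ≥ 2. -/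
/-!
`1 + ∑_{q ≥ 1} ∏_{r ≤ q} λ / (r(λ - 1) + 1)` is the normalising constant `∑_{n ≥ 0} w_λ(n)`
(`w = stationaryWeight`) of the stationary distribution of the inventory level, a birth–death
chain with birth rate `λ` and death rate `r(λ - 1) + 1` in state `r`. Each factor tends to
`1 / r`, so `w_λ(n) → 1 / n!`, and for `λ ≥ 2` every factor is at most `2 / r`, so
`w_λ(n) ≤ 2ⁿ / n!` uniformly. Dominated convergence (Tannery's theorem) gives
`∑ₙ w_λ(n) → ∑ₙ 1 / n! = e`.
-/

open Finset Filter Topology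

theorem prod_Icc_one_natCast_eq_factorial {R : Type*} [CommSemiring R] (n : ℕ) :
    ∏ r ∈ Icc 1 n, (r : R) = n.factorial := by
  rw [← Nat.cast_prod, ← Ico_add_one_right_eq_Icc, prod_Ico_id_eq_factorial]

theorem div_mul_sub_one_add_one_le_two_div {l r : ℝ} (hl : 2 ≤ l) (hr : 0 < r) :
    l / (r * (l - 1) + 1) ≤ 2 / r := by
  rw [div_le_div_iff₀ (by nlinarith) hr]
  nlinarith

theorem tendsto_div_mul_sub_one_add_one {r : ℝ} (hr : r ≠ 0) :
    Tendsto (fun l : ℝ => l / (r * (l - 1) + 1)) atTop (𝓝 r⁻¹) := by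
  have hden : Tendsto (fun l : ℝ => r + (1 - r) * l⁻¹) atTop (𝓝 r) := by
    simpa using tendsto_const_nhds.add (tendsto_inv_atTop_zero.const_mul (1 - r))
  refine (hden.inv₀ hr).congr' ?_
  filter_upwards [eventually_ne_atTop 0] with l hl
  rw [← inv_div]
  congr 1
  field_simp
  ring

noncomputable def stationaryWeight (l : ℝ) (n : ℕ) : ℝ :=
  ∏ r ∈ Icc 1 n, l / ((r : ℝ) * (l - 1) + 1)

namespace stationaryWeight

@[simp]
theorem zero (l : ℝ) : stationaryWeight l 0 = 1 := by
  simp [stationaryWeight]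

theorem nonneg {l : ℝ} (hl : 1 ≤ l) (n : ℕ) : 0 ≤ stationaryWeight l n :=
  prod_nonneg fun r _ => div_nonneg (by linarith) (by nlinarith [r.cast_nonneg (α := ℝ)])

theorem le_pow_div_factorial {l : ℝ} (hl : 2 ≤ l) (n : ℕ) :
    stationaryWeight l n ≤ 2 ^ n / n.factorial :=
  calc stationaryWeight l n
      ≤ ∏ r ∈ Icc 1 n, 2 / (r : ℝ) :=
        prod_le_prod
          (fun r _ => div_nonneg (by linarith) (by nlinarith [r.cast_nonneg (α := ℝ)]))
          fun r hr => div_mul_sub_one_add_one_le_two_div hl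
            (Nat.cast_pos.mpr (mem_Icc.mp hr).1)
    _ = 2 ^ n / n.factorial := by
        rw [prod_div_distrib, prod_const, prod_Icc_one_natCast_eq_factorial, Nat.card_Icc,
          Nat.add_sub_cancel]

theorem summable {l : ℝ} (hl : 2 ≤ l) : Summable (stationaryWeight l) :=
  (Real.summable_pow_div_factorial 2).of_nonneg_of_le (nonneg (by linarith))
    (le_pow_div_factorial hl)

theorem tendsto_inv_factorial (n : ℕ) :
    Tendsto (stationaryWeight · n) atTop (𝓝 (n.factorial : ℝ)⁻¹) := by
  rw [← prod_Icc_one_natCast_eq_factorial, ← prod_inv_distrib]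
  exact tendsto_finsetProd _ fun r hr =>
    tendsto_div_mul_sub_one_add_one
      (Nat.cast_ne_zero.mpr (Nat.one_le_iff_ne_zero.mp (mem_Icc.mp hr).1))

theorem tendsto_tsum_exp_one :
    Tendsto (fun l => ∑' n, stationaryWeight l n) atTop (𝓝 (Real.exp 1)) := by
  have hexp : ∑' n : ℕ, (n.factorial : ℝ)⁻¹ = Real.exp 1 := by
    simpa [Real.exp_eq_exp_ℝ] using (NormedSpace.expSeries_div_hasSum_exp (1 : ℝ)).tsum_eq
  rw [← hexp]
  refine tendsto_tsum_of_dominated_convergence (Real.summable_pow_div_factorial 2)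
    tendsto_inv_factorial ?_
  filter_upwards [eventually_ge_atTop 2] with l hl n
  rw [Real.norm_of_nonneg (nonneg (by linarith) n)]
  exact le_pow_div_factorial hl n

end stationaryWeight

/-- Limit computed in the proof of Observation 3.2: as `λ → ∞`,
`1 - (1 + ∑_{q=1}^∞ ∏_{r=1}^q λ/(r(λ-1)+1))⁻¹ → 1 - 1/e`; the series
converges for every `λ ≥ 2`. -/
theorem stmt_13 :
    (∀ l : ℝ, 2 ≤ l →
      Summable (fun q : ℕ =>
        ∏ r ∈ Finset.Icc 1 (q + 1), l / ((r : ℝ) * (l - 1) + 1))) ∧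
    Filter.Tendsto
      (fun l : ℝ =>
        1 - (1 + ∑' q : ℕ, ∏ r ∈ Finset.Icc 1 (q + 1), l / ((r : ℝ) * (l - 1) + 1))⁻¹)
      Filter.atTop (nhds (1 - 1 / Real.exp 1)) := by
  constructor
  · intro l hl
    exact (summable_nat_add_iff (f := stationaryWeight l) 1).mpr (stationaryWeight.summable hl)
  · have hlim := (stationaryWeight.tendsto_tsum_exp_one.inv₀ (Real.exp_ne_zero 1)).const_sub 1
    rw [one_div]
    refine hlim.congr' ?_
    filter_upwards [eventually_ge_atTop 2] with l hl
    rw [(stationaryWeight.summable hl).tsum_eq_zero_add, stationaryWeight.zero]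
    rfl
end
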